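/- Let R(t), R_d(t) be smooth curves in SO(3) with Ṙ = R Ω̂ and Ṙ_d = R_d Ω̂_d for Ω, Ω_d : ℝ → ℝ³. With G = diag(g₁,g₂,g₃) positive, Ψ = (1/2) tr(G(I − R_dᵀR)), e_R = (1/2)(G R_dᵀ R − Rᵀ R_d G)^∨, and e_Ω = Ω − Rᵀ R_d Ω_d, the time derivative of the error function satisfies Ψ̇ = e_R · e_Ω. -/

import Mathlib

open Matrix

noncomputable section

attribute [local instance] Matrix.normedAddCommGroup Matrix.normedSpace

/-- The hat map `ℝ³ → 𝔰𝔬(3)`, with `hat x *ᵥ y = x × y`. -/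
def hat (x : Fin 3 → ℝ) : Matrix (Fin 3) (Fin 3) ℝ :=
  !![0, -x 2, x 1; x 2, 0, -x 0; -x 1, x 0, 0]

/-- The vee map, inverse of the hat map on skew-symmetric matrices. -/
def vee (A : Matrix (Fin 3) (Fin 3) ℝ) : Fin 3 → ℝ :=
  ![A 2 1, A 0 2, A 1 0]

/-- Membership in the special orthogonal group SO(3). -/
def SO3 (R : Matrix (Fin 3) (Fin 3) ℝ) : Prop :=
  Rᵀ * R = 1 ∧ R.det = 1

/-- Euclidean norm on `ℝ³` (and `ℝ²`). -/
def norm3 (x : Fin 3 → ℝ) : ℝ := Real.sqrt (x ⬝ᵥ x)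

def norm2v (x : Fin 2 → ℝ) : ℝ := Real.sqrt (x ⬝ᵥ x)

/-- Attitude error function `Ψ(R,R_d) = (1/2) tr (G (I - R_dᵀ R))`. -/
def Psi (G R Rd : Matrix (Fin 3) (Fin 3) ℝ) : ℝ :=
  (1 / 2) * (G * (1 - Rdᵀ * R)).trace

/-- Attitude error vector `e_R = (1/2) (G R_dᵀ R - Rᵀ R_d G)^∨`. -/
def eR (G R Rd : Matrix (Fin 3) (Fin 3) ℝ) : Fin 3 → ℝ :=
  (1 / 2 : ℝ) • vee (G * Rdᵀ * R - Rᵀ * Rd * G)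

/-- Third standard basis vector of `ℝ³`. -/
def e3 : Fin 3 → ℝ := ![0, 0, 1]

/-! Since `Ψ = ½ tr G - ½ tr (G R_dᵀ R)`, the product rule gives
`Ψ̇ = -½ tr (G (Ṙ_dᵀ R + R_dᵀ Ṙ)) = ½ tr (G Ω̂_d Q) - ½ tr (G Q Ω̂)` with `Q = R_dᵀ R ∈ SO(3)`.
The identity `tr (A x̂) = -(A - Aᵀ)^∨ ⬝ x` turns the second trace into `-2 e_R ⬝ Ω`, and, after
cycling the first trace to `tr (Q G Ω̂_d)`, turns it into `-2 (Q e_R) ⬝ Ω_d = -2 e_R ⬝ Qᵀ Ω_d`;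
here `Q G - G Qᵀ = Q (G Q - Qᵀ G) Qᵀ` and conjugation by a rotation commutes with the hat map,
`Q x̂ Qᵀ = (Q x)^`. -/

section MatrixCalculus

variable {𝕜 : Type*} [NontriviallyNormedField 𝕜] {l m n : Type*} [Fintype n] {x : 𝕜}

theorem hasDerivAt_matrix {A : 𝕜 → Matrix m n 𝕜} {A' : Matrix m n 𝕜} :
    HasDerivAt A A' x ↔ ∀ i j, HasDerivAt (fun y => A y i j) (A' i j) x :=
  hasDerivAt_pi.trans (forall_congr' fun _ => hasDerivAt_pi)

theorem HasDerivAt.matrix_transpose [Fintype m] {A : 𝕜 → Matrix m n 𝕜} {A' : Matrix m n 𝕜}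
    (hA : HasDerivAt A A' x) : HasDerivAt (fun y => (A y)ᵀ) A'ᵀ x :=
  hasDerivAt_matrix.2 fun i j => hasDerivAt_matrix.1 hA j i

theorem HasDerivAt.matrix_mul [Fintype m] {A : 𝕜 → Matrix l m 𝕜} {B : 𝕜 → Matrix m n 𝕜}
    {A' : Matrix l m 𝕜} {B' : Matrix m n 𝕜} (hA : HasDerivAt A A' x) (hB : HasDerivAt B B' x) :
    HasDerivAt (fun y => A y * B y) (A' * B x + A x * B') x := by
  refine hasDerivAt_matrix.2 fun i k => ?_
  simp only [Matrix.add_apply, Matrix.mul_apply, ← Finset.sum_add_distrib]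
  exact HasDerivAt.fun_sum fun j _ =>
    (hasDerivAt_matrix.1 hA i j).mul (hasDerivAt_matrix.1 hB j k)

theorem HasDerivAt.matrix_trace {A : 𝕜 → Matrix n n 𝕜} {A' : Matrix n n 𝕜}
    (hA : HasDerivAt A A' x) : HasDerivAt (fun y => (A y).trace) A'.trace x :=
  HasDerivAt.fun_sum fun i _ => hasDerivAt_matrix.1 hA i i

end MatrixCalculus

theorem hasDerivAt_Psi (G : Matrix (Fin 3) (Fin 3) ℝ) {R Rd : ℝ → Matrix (Fin 3) (Fin 3) ℝ}
    {R' Rd' : Matrix (Fin 3) (Fin 3) ℝ} {t : ℝ} (hR : HasDerivAt R R' t)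
    (hRd : HasDerivAt Rd Rd' t) :
    HasDerivAt (fun s => Psi G (R s) (Rd s))
      (-(1 / 2) * (G * (Rd'ᵀ * R t + (Rd t)ᵀ * R')).trace) t := by
  have hQ := hRd.matrix_transpose.matrix_mul hR
  refine (((hasDerivAt_const t G).matrix_mul (hQ.const_sub 1)).matrix_trace.const_mul
    (1 / 2 : ℝ)).congr_deriv ?_
  rw [Matrix.zero_mul, zero_add, Matrix.mul_neg, Matrix.trace_neg, mul_neg, neg_mul]

theorem vee_hat (x : Fin 3 → ℝ) : vee (hat x) = x := by
  funext i; fin_cases i <;> simp [vee, hat]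

theorem hat_transpose (x : Fin 3 → ℝ) : (hat x)ᵀ = -hat x := by
  ext i j; fin_cases i <;> fin_cases j <;> simp [hat]

theorem hat_vee_of_transpose_eq_neg {B : Matrix (Fin 3) (Fin 3) ℝ} (hB : Bᵀ = -B) :
    hat (vee B) = B := by
  have h : ∀ i j, B j i = -B i j := fun i j => congrFun (congrFun hB i) j
  ext i j
  fin_cases i <;> fin_cases j <;> simp [hat, vee] <;>
    linarith [h 0 0, h 1 1, h 2 2, h 0 1, h 0 2, h 1 2]

theorem trace_mul_hat (A : Matrix (Fin 3) (Fin 3) ℝ) (x : Fin 3 → ℝ) :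
    (A * hat x).trace = -(vee (A - Aᵀ) ⬝ᵥ x) := by
  simp only [hat, vee, trace_fin_three, Matrix.mul_apply, Fin.sum_univ_three, dotProduct,
    Matrix.sub_apply, transpose_apply, of_apply, cons_val', cons_val_zero, cons_val_one, cons_val,
    cons_val_fin_one]
  ring

theorem hat_mulVec_mul (Q : Matrix (Fin 3) (Fin 3) ℝ) (x : Fin 3 → ℝ) :
    hat (Q *ᵥ x) * Q = Q.adjugateᵀ * hat x := by
  ext i j
  fin_cases i <;> fin_cases j <;>
    · simp [Matrix.mul_apply, Fin.sum_univ_three, hat, Matrix.mulVec, dotProduct,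
        Matrix.adjugate_fin_three]
      ring

namespace SO3

variable {Q : Matrix (Fin 3) (Fin 3) ℝ}

theorem mul_transpose (hQ : SO3 Q) : Q * Qᵀ = 1 :=
  mul_eq_one_comm.mp hQ.1

theorem transpose_mul {A B : Matrix (Fin 3) (Fin 3) ℝ} (hA : SO3 A) (hB : SO3 B) :
    SO3 (Aᵀ * B) := by
  refine ⟨?_, by simp [Matrix.det_mul, hA.2, hB.2]⟩
  calc (Aᵀ * B)ᵀ * (Aᵀ * B) = Bᵀ * (A * Aᵀ) * B := by
        simp only [Matrix.transpose_mul, Matrix.transpose_transpose, Matrix.mul_assoc]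
    _ = 1 := by rw [hA.mul_transpose, Matrix.mul_one, hB.1]

theorem transpose_eq_adjugate (hQ : SO3 Q) : Qᵀ = Q.adjugate := by
  calc Qᵀ = Qᵀ * Q * Q.adjugate := by
        rw [Matrix.mul_assoc, Matrix.mul_adjugate, hQ.2, one_smul, Matrix.mul_one]
    _ = Q.adjugate := by rw [hQ.1, Matrix.one_mul]

theorem hat_mulVec (hQ : SO3 Q) (x : Fin 3 → ℝ) : hat (Q *ᵥ x) = Q * hat x * Qᵀ := by
  calc hat (Q *ᵥ x) = hat (Q *ᵥ x) * Q * Qᵀ := by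
        rw [Matrix.mul_assoc, hQ.mul_transpose, Matrix.mul_one]
    _ = Q * hat x * Qᵀ := by
        rw [hat_mulVec_mul, ← hQ.transpose_eq_adjugate, Matrix.transpose_transpose]

theorem vee_mul_mul_transpose (hQ : SO3 Q) {B : Matrix (Fin 3) (Fin 3) ℝ} (hB : Bᵀ = -B) :
    vee (Q * B * Qᵀ) = Q *ᵥ vee B := by
  rw [← hat_vee_of_transpose_eq_neg hB, ← hQ.hat_mulVec, vee_hat, vee_hat]

end SO3

section ErrorFunction

variable {G : Matrix (Fin 3) (Fin 3) ℝ}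

theorem trace_mul_mul_hat_of_transpose_eq (hG : Gᵀ = G) (Q : Matrix (Fin 3) (Fin 3) ℝ)
    (x : Fin 3 → ℝ) : (G * Q * hat x).trace = -(vee (G * Q - Qᵀ * G) ⬝ᵥ x) := by
  rw [trace_mul_hat, Matrix.transpose_mul, hG]

theorem SO3.trace_mul_hat_mul_of_transpose_eq (hG : Gᵀ = G) {Q : Matrix (Fin 3) (Fin 3) ℝ}
    (hQ : SO3 Q) (x : Fin 3 → ℝ) :
    (G * hat x * Q).trace = -(vee (G * Q - Qᵀ * G) ⬝ᵥ Qᵀ *ᵥ x) := by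
  set B := G * Q - Qᵀ * G
  have hB : Bᵀ = -B := by
    simp only [B, Matrix.transpose_sub, Matrix.transpose_mul, Matrix.transpose_transpose, hG,
      neg_sub]
  have hconj : Q * B * Qᵀ = Q * G - (Q * G)ᵀ := by
    calc Q * B * Qᵀ = Q * G * (Q * Qᵀ) - Q * Qᵀ * (G * Qᵀ) := by
          simp only [B]; noncomm_ring
      _ = Q * G - (Q * G)ᵀ := by
          rw [hQ.mul_transpose, Matrix.mul_one, Matrix.one_mul, Matrix.transpose_mul, hG]
  calc (G * hat x * Q).trace = (Q * G * hat x).trace := Matrix.trace_mul_cycle _ _ _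
    _ = -((Q *ᵥ vee B) ⬝ᵥ x) := by
      rw [trace_mul_hat, ← hconj, hQ.vee_mul_mul_transpose hB]
    _ = -(vee B ⬝ᵥ Qᵀ *ᵥ x) := by rw [dotProduct_transpose_mulVec, dotProduct_comm]

theorem eR_dotProduct_eq_neg_half_trace (hG : Gᵀ = G) {R Rd : Matrix (Fin 3) (Fin 3) ℝ}
    (hQ : SO3 (Rdᵀ * R)) (Ω Ωd : Fin 3 → ℝ) :
    eR G R Rd ⬝ᵥ (Ω - (Rᵀ * Rd) *ᵥ Ωd) =
      -(1 / 2) * (G * ((Rd * hat Ωd)ᵀ * R + Rdᵀ * (R * hat Ω))).trace := by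
  set Q := Rdᵀ * R
  have hsplit :
      G * ((Rd * hat Ωd)ᵀ * R + Rdᵀ * (R * hat Ω)) = G * Q * hat Ω - G * hat Ωd * Q := by
    simp only [Q, Matrix.transpose_mul, hat_transpose]
    noncomm_ring
  have hQt : Rᵀ * Rd = Qᵀ := by rw [Matrix.transpose_mul, Matrix.transpose_transpose]
  have heR : eR G R Rd = (1 / 2 : ℝ) • vee (G * Q - Qᵀ * G) := by
    rw [eR, ← hQt, Matrix.mul_assoc]
  rw [hsplit, Matrix.trace_sub, trace_mul_mul_hat_of_transpose_eq hG,
    hQ.trace_mul_hat_mul_of_transpose_eq hG, heR, hQt, smul_dotProduct, dotProduct_sub,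
    smul_eq_mul]
  ring

end ErrorFunction

theorem psi_dot_eq_general (g : Fin 3 → ℝ)
    (R Rd : ℝ → Matrix (Fin 3) (Fin 3) ℝ) (Ω Ωd : ℝ → Fin 3 → ℝ)
    (hSO : ∀ t, SO3 (R t)) (hSOd : ∀ t, SO3 (Rd t))
    (hR : ∀ t, HasDerivAt R (R t * hat (Ω t)) t)
    (hRd : ∀ t, HasDerivAt Rd (Rd t * hat (Ωd t)) t)
    (t : ℝ) :
    HasDerivAt (fun s => Psi (diagonal g) (R s) (Rd s))
      (eR (diagonal g) (R t) (Rd t) ⬝ᵥ (Ω t - ((R t)ᵀ * Rd t) *ᵥ Ωd t)) t :=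
  (hasDerivAt_Psi _ (hR t) (hRd t)).congr_deriv
    (eR_dotProduct_eq_neg_half_trace (diagonal_transpose g)
      ((hSOd t).transpose_mul (hSO t)) _ _).symm

/-- `Ψ̇ = e_R ⋅ e_Ω` along solutions of the attitude kinematics. -/
theorem psi_dot_eq (g : Fin 3 → ℝ) (hpos : ∀ i, 0 < g i)
    (R Rd : ℝ → Matrix (Fin 3) (Fin 3) ℝ) (Ω Ωd : ℝ → Fin 3 → ℝ)
    (hSO : ∀ t, SO3 (R t)) (hSOd : ∀ t, SO3 (Rd t))
    (hR : ∀ t, HasDerivAt R (R t * hat (Ω t)) t)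
    (hRd : ∀ t, HasDerivAt Rd (Rd t * hat (Ωd t)) t)
    (t : ℝ) :
    HasDerivAt (fun s => Psi (diagonal g) (R s) (Rd s))
      (eR (diagonal g) (R t) (Rd t) ⬝ᵥ (Ω t - ((R t)ᵀ * Rd t) *ᵥ Ωd t)) t :=
  psi_dot_eq_general g R Rd Ω Ωd hSO hSOd hR hRd t
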